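/- Let g, Ŝ, y*(x), ỹ_δ(x) and L = L_xx + 2L_xy²/μ_y be as above, with Ŝ(·, y) convex in x (being F(·,y) - h(y) with F convex in x). Then for all x, z ∈ Q_x: 0 ≤ g(z) - [Ŝ(x, ỹ_δ(x)) + ⟨∇_x F(x, ỹ_δ(x)), z - x⟩] ≤ L ‖z - x‖₂² + 2δ. In other words, ∇_x F(x, ỹ_δ(x)) is a (2δ, 2L)-gradient of g at x. -/

import Mathlib

open Set
open scoped InnerProductSpace

/-! Write `Ŝ x y = F x y - h y`. The lower bound is the gradient inequality for the convex
function `Ŝ(·, ỹ)` followed by `Ŝ(z, ỹ) ≤ g z`. For the upper bound, `μ`-strong concavity of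
`Ŝ(x, ·)` gives quadratic growth away from its maximiser `y*(x)`. Hence `‖ỹ - y*(x)‖² ≤ 2δ/μ`,
and comparing the growth at `x` and at `z` shows that `y*` is `(L_xy/μ)`-Lipschitz. Expanding
`Ŝ(·, y*(z))` around `x`, replacing `∇ₓF(x, y*(z))` by `∇ₓF(x, ỹ)` at the cost of
`L_xy ‖y*(z) - ỹ‖ ‖z - x‖` and applying AM–GM bounds `g z` by the linear model plus
`(L_xx + 3L_xy²/(2μ)) ‖z - x‖² + 2δ`; so the crude descent lemma with constant `L_xx` (instead of
`L_xx / 2`) suffices. -/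

section Gradient

variable {E : Type*} [NormedAddCommGroup E] [InnerProductSpace ℝ E] [CompleteSpace E]
  {f : E → ℝ} {s : Set E} {x z : E}

theorem ConvexOn.add_inner_le_of_hasGradientAt {G : E} (hf : ConvexOn ℝ s f) (hx : x ∈ s)
    (hz : z ∈ s) (hG : HasGradientAt f G x) : f x + ⟪G, z - x⟫_ℝ ≤ f z := by
  set ℓ : ℝ →ᵃ[ℝ] E := AffineMap.lineMap x z
  have hℓ0 : ℓ 0 = x := AffineMap.lineMap_apply_zero x z
  have hℓ1 : ℓ 1 = z := AffineMap.lineMap_apply_one x z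
  have hline : ConvexOn ℝ (ℓ ⁻¹' s) (f ∘ ℓ) := hf.comp_affineMap ℓ
  have hderiv : HasDerivAt (f ∘ ℓ) ⟪G, z - x⟫_ℝ 0 := by
    rw [← hℓ0] at hG
    simpa using hG.hasFDerivAt.comp_hasDerivAt (0 : ℝ) AffineMap.hasDerivAt_lineMap
  have := hline.le_slope_of_hasDerivAt (by simpa [hℓ0]) (by simpa [hℓ1]) one_pos hderiv
  rw [slope_def_field] at this
  simp only [Function.comp_apply, hℓ0, hℓ1, sub_zero, div_one] at this
  linarith

theorem Convex.abs_sub_sub_inner_le {G : E → E} {G₀ : E} {C : ℝ} (hs : Convex ℝ s)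
    (hf : ∀ p ∈ s, HasGradientAt f (G p) p) (hbound : ∀ p ∈ s, ‖G p - G₀‖ ≤ C)
    (hx : x ∈ s) (hz : z ∈ s) :
    |f z - f x - ⟪G₀, z - x⟫_ℝ| ≤ C * ‖z - x‖ := by
  have := hs.norm_image_sub_le_of_norm_hasFDerivWithin_le'
    (f' := fun p => InnerProductSpace.toDual ℝ E (G p)) (φ := InnerProductSpace.toDual ℝ E G₀)
    (fun p hp => (hf p hp).hasFDerivAt.hasFDerivWithinAt)
    (fun p hp => by simpa [← map_sub] using hbound p hp) hx hz
  simpa using this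

theorem le_add_inner_add_mul_sq_of_lipschitz_gradient {G : E → E} {L : ℝ} (hL : 0 ≤ L)
    (hf : ∀ p, HasGradientAt f (G p) p) (hG : ∀ p q, ‖G p - G q‖ ≤ L * ‖p - q‖) (x z : E) :
    f z ≤ f x + ⟪G x, z - x⟫_ℝ + L * ‖z - x‖ ^ 2 := by
  have := (convex_closedBall x ‖z - x‖).abs_sub_sub_inner_le (fun p _ => hf p)
    (fun p hp => (hG p x).trans (mul_le_mul_of_nonneg_left (mem_closedBall_iff_norm.1 hp) hL))
    (Metric.mem_closedBall_self (norm_nonneg _)) (mem_closedBall_iff_norm.2 le_rfl)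
  linarith [le_abs_self (f z - f x - ⟪G x, z - x⟫_ℝ)]

end Gradient

theorem StrongConcaveOn.add_sq_norm_sub_le_of_isMaxOn {Y : Type*} [NormedAddCommGroup Y]
    [NormedSpace ℝ Y] {s : Set Y} {ψ : Y → ℝ} {m : ℝ} {b y : Y}
    (hψ : StrongConcaveOn s m ψ) (hmax : IsMaxOn ψ s b) (hb : b ∈ s) (hy : y ∈ s) :
    ψ y + m / 2 * ‖y - b‖ ^ 2 ≤ ψ b := by
  have hinterior : ∀ t ∈ Ioo (0 : ℝ) 1, ψ y + (1 - t) * (m / 2 * ‖y - b‖ ^ 2) ≤ ψ b := by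
    rintro t ⟨ht0, ht1⟩
    have hmid := hψ.2 hb hy (sub_nonneg.2 ht1.le) ht0.le (sub_add_cancel 1 t)
    have hle := isMaxOn_iff.1 hmax _
      (hψ.1 hb hy (sub_nonneg.2 ht1.le) ht0.le (sub_add_cancel 1 t))
    simp only [smul_eq_mul, norm_sub_rev b y] at hmid
    have : t * (ψ y + (1 - t) * (m / 2 * ‖y - b‖ ^ 2)) ≤ t * ψ b := by linarith
    exact le_of_mul_le_mul_left this ht0
  have hclosed : IsClosed {t : ℝ | ψ y + (1 - t) * (m / 2 * ‖y - b‖ ^ 2) ≤ ψ b} :=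
    isClosed_le (by fun_prop) continuous_const
  have h0 : (0 : ℝ) ∈ closure (Ioo 0 1) := by simp [closure_Ioo zero_ne_one]
  simpa using hclosed.closure_subset_iff.2 hinterior h0

section Saddle

variable {E Y : Type*} [NormedAddCommGroup E] [InnerProductSpace ℝ E] [CompleteSpace E]
  [NormedAddCommGroup Y] {S : E → Y → ℝ} {Sx : E → Y → E} {Q : Set Y} {ystar : E → Y} {μ Lxy : ℝ}

theorem sub_sub_sub_le_of_norm_gradient_sub_le
    (hS : ∀ x y, HasGradientAt (S · y) (Sx x y) x)
    (hLip : ∀ x a b, ‖Sx x a - Sx x b‖ ≤ Lxy * ‖a - b‖) (x z : E) (a b : Y) :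
    S x a - S x b - (S z a - S z b) ≤ Lxy * ‖a - b‖ * ‖z - x‖ := by
  have := convex_univ.abs_sub_sub_inner_le (f := fun p => S p a - S p b) (G₀ := 0)
    (G := fun p => Sx p a - Sx p b)
    (fun p _ => by
      rw [hasGradientAt_iff_hasFDerivAt, map_sub]
      exact (hS p a).hasFDerivAt.sub (hS p b).hasFDerivAt) (fun p _ => by simpa using hLip p a b)
    (mem_univ x) (mem_univ z)
  simp only [inner_zero_left, sub_zero] at this
  linarith [neg_abs_le (S z a - S z b - (S x a - S x b))]

theorem mul_norm_sub_le_mul_norm_sub_of_isMaxOn [NormedSpace ℝ Y] (hLxy : 0 ≤ Lxy)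
    (hS : ∀ x y, HasGradientAt (S · y) (Sx x y) x)
    (hLip : ∀ x a b, ‖Sx x a - Sx x b‖ ≤ Lxy * ‖a - b‖)
    (hconc : ∀ x, StrongConcaveOn Q μ (S x)) (hmem : ∀ x, ystar x ∈ Q)
    (hmax : ∀ x, IsMaxOn (S x) Q (ystar x)) (x z : E) :
    μ * ‖ystar z - ystar x‖ ≤ Lxy * ‖z - x‖ := by
  have hgrowth_x := (hconc x).add_sq_norm_sub_le_of_isMaxOn (hmax x) (hmem x) (hmem z)
  have hgrowth_z := (hconc z).add_sq_norm_sub_le_of_isMaxOn (hmax z) (hmem z) (hmem x)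
  have hcross := sub_sub_sub_le_of_norm_gradient_sub_le hS hLip x z (ystar x) (ystar z)
  rw [norm_sub_rev (ystar x)] at hgrowth_z hcross
  have hsq : μ * ‖ystar z - ystar x‖ ^ 2 ≤ Lxy * ‖z - x‖ * ‖ystar z - ystar x‖ := by linarith
  rcases (norm_nonneg (ystar z - ystar x)).eq_or_lt with hr | hr
  · rw [← hr, mul_zero]
    positivity
  · nlinarith

theorem le_add_inner_add_sq_of_sub_le_of_isMaxOn [NormedSpace ℝ Y] {Lxx δ : ℝ} (hμ : 0 < μ)
    (hLxy : 0 ≤ Lxy) (hLxx : 0 ≤ Lxx) (hS : ∀ x y, HasGradientAt (S · y) (Sx x y) x)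
    (hLipY : ∀ x a b, ‖Sx x a - Sx x b‖ ≤ Lxy * ‖a - b‖)
    (hLipX : ∀ x x' y, ‖Sx x y - Sx x' y‖ ≤ Lxx * ‖x - x'‖)
    (hconc : ∀ x, StrongConcaveOn Q μ (S x)) (hmem : ∀ x, ystar x ∈ Q)
    (hmax : ∀ x, IsMaxOn (S x) Q (ystar x)) {x z : E} {yt : Y} (hyt : yt ∈ Q)
    (hgap : S x (ystar x) - S x yt ≤ δ) :
    S z (ystar z) ≤ S x yt + ⟪Sx x yt, z - x⟫_ℝ + (Lxx + 2 * Lxy ^ 2 / μ) * ‖z - x‖ ^ 2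
      + 2 * δ := by
  set R := ‖z - x‖
  set r := ‖ystar z - ystar x‖
  set d := ‖yt - ystar x‖
  have hd : μ / 2 * d ^ 2 ≤ δ := by
    linarith [(hconc x).add_sq_norm_sub_le_of_isMaxOn (hmax x) (hmem x) hyt]
  have hr : μ * r ≤ Lxy * R :=
    mul_norm_sub_le_mul_norm_sub_of_isMaxOn hLxy hS hLipY hconc hmem hmax x z
  have hdescent : S z (ystar z) ≤ S x (ystar z) + ⟪Sx x (ystar z), z - x⟫_ℝ + Lxx * R ^ 2 :=
    le_add_inner_add_mul_sq_of_lipschitz_gradient hLxx (hS · (ystar z)) (hLipX · · (ystar z)) x z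
  have hinner : ⟪Sx x (ystar z), z - x⟫_ℝ ≤ ⟪Sx x yt, z - x⟫_ℝ + Lxy * (r + d) * R :=
    calc ⟪Sx x (ystar z), z - x⟫_ℝ
        = ⟪Sx x yt, z - x⟫_ℝ + ⟪Sx x (ystar z) - Sx x yt, z - x⟫_ℝ := by
          rw [inner_sub_left]; ring
      _ ≤ ⟪Sx x yt, z - x⟫_ℝ + Lxy * ‖ystar z - yt‖ * R := by
          gcongr
          exact (real_inner_le_norm _ _).trans (by gcongr; exact hLipY x _ _)
      _ ≤ ⟪Sx x yt, z - x⟫_ℝ + Lxy * (r + d) * R := by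
          gcongr
          exact (norm_sub_le_norm_sub_add_norm_sub _ (ystar x) _).trans_eq
            (by rw [norm_sub_rev (ystar x)])
  have hmix : Lxy * (r + d) * R ≤ 3 / 2 * (Lxy ^ 2 / μ * R ^ 2) + δ := by
    refine le_of_mul_le_mul_left ?_ hμ
    have hrhs : μ * (3 / 2 * (Lxy ^ 2 / μ * R ^ 2) + δ) = 3 / 2 * (Lxy * R) ^ 2 + μ * δ := by
      field_simp
    rw [hrhs]
    nlinarith [sq_nonneg (μ * d - Lxy * R), mul_le_mul_of_nonneg_left hd hμ.le,
      mul_le_mul_of_nonneg_left hr (by positivity : 0 ≤ Lxy * R)]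
  have hmax_x : S x (ystar z) ≤ S x (ystar x) := isMaxOn_iff.1 (hmax x) _ (hmem z)
  have hcoef : (Lxx + 2 * Lxy ^ 2 / μ) * R ^ 2 = Lxx * R ^ 2 + 2 * (Lxy ^ 2 / μ * R ^ 2) := by
    ring
  have hnonneg : 0 ≤ Lxy ^ 2 / μ * R ^ 2 := by positivity
  linarith

end Saddle

theorem stmt_8_general {n m : ℕ} (μy Lxy Lxx δ : ℝ) (hμ : 0 < μy) (hLxy : 0 ≤ Lxy)
    (hLxx : 0 ≤ Lxx)
    (Qx : Set (EuclideanSpace ℝ (Fin n)))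
    (Qy : Set (EuclideanSpace ℝ (Fin m)))
    (F : EuclideanSpace ℝ (Fin n) → EuclideanSpace ℝ (Fin m) → ℝ)
    (h : EuclideanSpace ℝ (Fin m) → ℝ)
    -- Ŝ(·,y) = F(·,y) - h(y) is convex in x
    (hconvx : ∀ y ∈ Qy, ConvexOn ℝ Qx (fun x => F x y - h y))
    (hconc : ∀ x, ConcaveOn ℝ Qy (fun y => F x y - h y + μy / 2 * ‖y‖ ^ 2))
    (ystar : EuclideanSpace ℝ (Fin n) → EuclideanSpace ℝ (Fin m))
    (hystar_mem : ∀ x, ystar x ∈ Qy)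
    (hystar_max : ∀ x, ∀ y ∈ Qy, F x y - h y ≤ F x (ystar x) - h (ystar x))
    (Fx : EuclideanSpace ℝ (Fin n) → EuclideanSpace ℝ (Fin m) → EuclideanSpace ℝ (Fin n))
    (hFx : ∀ x y, HasGradientAt (fun x' => F x' y) (Fx x y) x)
    (hFxLipY : ∀ x y y', ‖Fx x y - Fx x y'‖ ≤ Lxy * ‖y - y'‖)
    (hFxLipX : ∀ x x' y, ‖Fx x y - Fx x' y‖ ≤ Lxx * ‖x - x'‖)
    (g : EuclideanSpace ℝ (Fin n) → ℝ)
    (hg : ∀ x, g x = F x (ystar x) - h (ystar x))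
    (ytil : EuclideanSpace ℝ (Fin n) → EuclideanSpace ℝ (Fin m))
    (hytil_mem : ∀ x, ytil x ∈ Qy)
    (hytil : ∀ x ∈ Qx, g x - (F x (ytil x) - h (ytil x)) ≤ δ) :
    ∀ x ∈ Qx, ∀ z ∈ Qx,
      0 ≤ g z - ((F x (ytil x) - h (ytil x)) + ⟪Fx x (ytil x), z - x⟫_ℝ) ∧
      g z - ((F x (ytil x) - h (ytil x)) + ⟪Fx x (ytil x), z - x⟫_ℝ) ≤
        (Lxx + 2 * Lxy ^ 2 / μy) * ‖z - x‖ ^ 2 + 2 * δ := by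
  intro x hx z hz
  have hS : ∀ x y, HasGradientAt (fun x' => F x' y - h y) (Fx x y) x := fun x y => by
    rw [hasGradientAt_iff_hasFDerivAt]
    exact (hFx x y).hasFDerivAt.sub_const (h y)
  have hmax : ∀ x, IsMaxOn (fun y => F x y - h y) Qy (ystar x) :=
    fun x => isMaxOn_iff.2 (hystar_max x)
  have hstrong : ∀ x, StrongConcaveOn Qy μy (fun y => F x y - h y) :=
    fun x => strongConcaveOn_iff_convex.2 (hconc x)
  rw [hg z]
  constructor
  · have hlower := (hconvx _ (hytil_mem x)).add_inner_le_of_hasGradientAt hx hz (hS x (ytil x))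
    linarith [hystar_max z _ (hytil_mem x)]
  · have hupper := le_add_inner_add_sq_of_sub_le_of_isMaxOn hμ hLxy hLxx hS hFxLipY hFxLipX
      hstrong hystar_mem hmax (hytil_mem x) (z := z) (δ := δ) (by rw [← hg x]; exact hytil x hx)
    linarith

theorem stmt_8 {n m : ℕ} (μy Lxy Lxx δ : ℝ) (hμ : 0 < μy) (hLxy : 0 ≤ Lxy)
    (hLxx : 0 ≤ Lxx) (hδ : 0 ≤ δ)
    (Qx : Set (EuclideanSpace ℝ (Fin n))) (hQx : Convex ℝ Qx)
    (Qy : Set (EuclideanSpace ℝ (Fin m))) (hQy : Convex ℝ Qy)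
    (F : EuclideanSpace ℝ (Fin n) → EuclideanSpace ℝ (Fin m) → ℝ)
    (h : EuclideanSpace ℝ (Fin m) → ℝ)
    -- Ŝ(·,y) = F(·,y) - h(y) is convex in x
    (hconvx : ∀ y ∈ Qy, ConvexOn ℝ Qx (fun x => F x y - h y))
    (hconc : ∀ x, ConcaveOn ℝ Qy (fun y => F x y - h y + μy / 2 * ‖y‖ ^ 2))
    (ystar : EuclideanSpace ℝ (Fin n) → EuclideanSpace ℝ (Fin m))
    (hystar_mem : ∀ x, ystar x ∈ Qy)
    (hystar_max : ∀ x, ∀ y ∈ Qy, F x y - h y ≤ F x (ystar x) - h (ystar x))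
    (Fx : EuclideanSpace ℝ (Fin n) → EuclideanSpace ℝ (Fin m) → EuclideanSpace ℝ (Fin n))
    (hFx : ∀ x y, HasGradientAt (fun x' => F x' y) (Fx x y) x)
    (hFxLipY : ∀ x y y', ‖Fx x y - Fx x y'‖ ≤ Lxy * ‖y - y'‖)
    (hFxLipX : ∀ x x' y, ‖Fx x y - Fx x' y‖ ≤ Lxx * ‖x - x'‖)
    (g : EuclideanSpace ℝ (Fin n) → ℝ)
    (hg : ∀ x, g x = F x (ystar x) - h (ystar x))
    (ytil : EuclideanSpace ℝ (Fin n) → EuclideanSpace ℝ (Fin m))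
    (hytil_mem : ∀ x, ytil x ∈ Qy)
    (hytil : ∀ x ∈ Qx, g x - (F x (ytil x) - h (ytil x)) ≤ δ) :
    ∀ x ∈ Qx, ∀ z ∈ Qx,
      0 ≤ g z - ((F x (ytil x) - h (ytil x)) + ⟪Fx x (ytil x), z - x⟫_ℝ) ∧
      g z - ((F x (ytil x) - h (ytil x)) + ⟪Fx x (ytil x), z - x⟫_ℝ) ≤
        (Lxx + 2 * Lxy ^ 2 / μy) * ‖z - x‖ ^ 2 + 2 * δ :=
  stmt_8_general μy Lxy Lxx δ hμ hLxy hLxx Qx Qy F h hconvx hconc ystar hystar_mem hystar_max Fx hFx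
    hFxLipY hFxLipX g hg ytil hytil_mem hytil
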